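/- arXiv:2110.05711 — 7 statements merged into one kernel-verified Lean document; each statement's English description precedes it below -/
import Mathlib

section
/- If the map D : V₀ → V₁ is bijective, then (V, d) is acyclic, i.e. ker d = d(V): every x ∈ V with d x = 0 lies in the image of d. -/
/-!
Given a cycle `x`, surjectivity of `D` yields `w ∈ V₀` with `π₁ (d w) = π₁ x`, so `x - d w` has no
`V₁`-component and lies in `V₀`. It is again a cycle, hence `D (x - d w) = 0`, and injectivity of `D`
gives `x = d w`.
-/

theorem sub_mem_of_proj_eq {M S : Type*} [AddCommGroup M] [SetLike S M] [AddSubgroupClass S M]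
    (V₀ : S) (π₀ π₁ : M → M) (hπ₀ : ∀ x, π₀ x ∈ V₀) (hπ : ∀ x, π₀ x + π₁ x = x)
    {x y : M} (h : π₁ x = π₁ y) : x - y ∈ V₀ := by
  have hxy : x - y = π₀ x - π₀ y := by
    conv_lhs => rw [← hπ x, ← hπ y, h]
    abel
  rw [hxy]
  exact sub_mem (hπ₀ x) (hπ₀ y)

theorem LinearMap.ker_le_range_of_forall_exists_sub_mem {R M : Type*} [Ring R] [AddCommGroup M]
    [Module R M] (d : M →ₗ[R] M) (hdd : ∀ x, d (d x) = 0) (V₀ : Submodule R M)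
    (hV₀ : ∀ z ∈ V₀, d z = 0 → z = 0) (hcover : ∀ x, ∃ w, x - d w ∈ V₀) :
    LinearMap.ker d ≤ LinearMap.range d := by
  intro x hx
  obtain ⟨w, hw⟩ := hcover x
  have hcycle : d (x - d w) = 0 := by
    rw [map_sub, LinearMap.mem_ker.mp hx, hdd, sub_zero]
  exact ⟨w, (sub_eq_zero.mp (hV₀ _ hw hcycle)).symm⟩

theorem acyclic_of_D_bijective_general
    {K V : Type*} [Field K] [AddCommGroup V] [Module K V]
    (d : V →ₗ[K] V) (hdd : ∀ x : V, d (d x) = 0)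
    (V₀ V₁ : Submodule K V)
    (π₀ π₁ : V →ₗ[K] V)
    (hπ₀ : ∀ x : V, π₀ x ∈ V₀) (hπ₁ : ∀ x : V, π₁ x ∈ V₁)
    (hπ : ∀ x : V, π₀ x + π₁ x = x)
    (hDinj : ∀ x ∈ V₀, π₁ (d x) = 0 → x = 0)
    (hDsurj : ∀ y ∈ V₁, ∃ x ∈ V₀, π₁ (d x) = y) :
    LinearMap.ker d = LinearMap.range d := by
  have hV₀ : ∀ z ∈ V₀, d z = 0 → z = 0 := fun z hz hdz => hDinj z hz (by rw [hdz, map_zero])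
  have hcover : ∀ x, ∃ w, x - d w ∈ V₀ := fun x => by
    obtain ⟨w, -, hw⟩ := hDsurj (π₁ x) (hπ₁ x)
    exact ⟨w, sub_mem_of_proj_eq V₀ π₀ π₁ hπ₀ hπ hw.symm⟩
  refine le_antisymm (d.ker_le_range_of_forall_exists_sub_mem hdd V₀ hV₀ hcover) ?_
  exact LinearMap.range_le_ker_iff.mpr (LinearMap.ext hdd)

/-- Setup: `V` a `K`-vector space with differential `d` (`d ∘ d = 0`),
`V₁ ⊆ V` a `d`-invariant subspace, `V₀` a complement, `π₀, π₁` the projections onto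
`V₀` and `V₁`, and `D = π₁ ∘ d : V₀ → V₁`.  If `D` is bijective (injective on `V₀` and
surjective onto `V₁`), then `(V, d)` is acyclic: `ker d = d(V)`. -/
theorem acyclic_of_D_bijective
    {K V : Type*} [Field K] [AddCommGroup V] [Module K V]
    (d : V →ₗ[K] V) (hdd : ∀ x : V, d (d x) = 0)
    (V₀ V₁ : Submodule K V) (hcompl : IsCompl V₀ V₁)
    (hdV₁ : ∀ x ∈ V₁, d x ∈ V₁)
    (π₀ π₁ : V →ₗ[K] V)
    (hπ₀ : ∀ x : V, π₀ x ∈ V₀) (hπ₁ : ∀ x : V, π₁ x ∈ V₁)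
    (hπ : ∀ x : V, π₀ x + π₁ x = x)
    (hDinj : ∀ x ∈ V₀, π₁ (d x) = 0 → x = 0)
    (hDsurj : ∀ y ∈ V₁, ∃ x ∈ V₀, π₁ (d x) = y) :
    LinearMap.ker d = LinearMap.range d :=
  acyclic_of_D_bijective_general d hdd V₀ V₁ π₀ π₁ hπ₀ hπ₁ hπ hDinj hDsurj
end

section
/- Assume D : V₀ → V₁ is bijective. If x₀ ∈ V₀ and x₁ ∈ V₁ satisfy d(x₀ + x₁) = 0, then x₀ = d₀(D⁻¹ x₁) and x₀ + x₁ = d(D⁻¹ x₁); in particular every cocycle of (V, d) is the coboundary of an explicitly given element. -/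
/-!
For `w ∈ V₀` with `π₁ (d w) = x₁`, the difference `(x₀ + x₁) - d w = x₀ - π₀ (d w)` lies in `V₀`
and is killed by `d` (because `d ∘ d = 0`), so injectivity of `D = π₁ ∘ d` on `V₀` forces it to
vanish.
-/

theorem eq_of_sub_mem_of_map_eq {R V W U : Type*} [Ring R] [AddCommGroup V] [Module R V]
    [AddCommGroup W] [Module R W] [AddCommGroup U] [Module R U]
    (d : V →ₗ[R] W) (π₁ : W →ₗ[R] U) (V₀ : Submodule R V)
    (hDinj : ∀ x ∈ V₀, π₁ (d x) = 0 → x = 0) {y z : V} (hsub : y - z ∈ V₀)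
    (hd : d y = d z) : y = z :=
  sub_eq_zero.mp <| hDinj _ hsub <| by rw [map_sub, hd, sub_self, map_zero]

theorem cocycle_is_explicit_coboundary_of_D_bijective_general
    {K V : Type*} [Field K] [AddCommGroup V] [Module K V]
    (d : V →ₗ[K] V) (hdd : ∀ x : V, d (d x) = 0)
    (V₀ V₁ : Submodule K V)
    (π₀ π₁ : V →ₗ[K] V)
    (hπ₀ : ∀ x : V, π₀ x ∈ V₀)
    (hπ : ∀ x : V, π₀ x + π₁ x = x)
    (hDinj : ∀ x ∈ V₀, π₁ (d x) = 0 → x = 0) :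
    ∀ x₀ ∈ V₀, ∀ x₁ ∈ V₁, d (x₀ + x₁) = 0 →
      ∀ w ∈ V₀, π₁ (d w) = x₁ →
        x₀ = π₀ (d w) ∧ x₀ + x₁ = d w := by
  intro x₀ hx₀ x₁ _ hcocycle w _ hw
  have hdw : π₀ (d w) + x₁ = d w := hw ▸ hπ (d w)
  have hcob : x₀ + x₁ = d w := by
    refine eq_of_sub_mem_of_map_eq d π₁ V₀ hDinj ?_ (by rw [hcocycle, hdd])
    rw [← hdw, add_sub_add_right_eq_sub]
    exact V₀.sub_mem hx₀ (hπ₀ _)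
  exact ⟨add_right_cancel (hcob.trans hdw.symm), hcob⟩

/-- Setup: `V` a `K`-vector space with differential `d` (`d ∘ d = 0`),
`V₁ ⊆ V` a `d`-invariant subspace, `V₀` a complement, `π₀, π₁` the projections onto
`V₀` and `V₁`, and `D = π₁ ∘ d : V₀ → V₁`.  Assume `D` is bijective.  If `x₀ ∈ V₀` and
`x₁ ∈ V₁` satisfy `d (x₀ + x₁) = 0`, then, writing `w ∈ V₀` for the preimage `D⁻¹ x₁`
(i.e. `π₁ (d w) = x₁`), one has `x₀ = d₀ (D⁻¹ x₁) = π₀ (d w)` and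
`x₀ + x₁ = d (D⁻¹ x₁) = d w`; in particular every cocycle of `(V, d)` is the
coboundary of an explicitly given element. -/
theorem cocycle_is_explicit_coboundary_of_D_bijective
    {K V : Type*} [Field K] [AddCommGroup V] [Module K V]
    (d : V →ₗ[K] V) (hdd : ∀ x : V, d (d x) = 0)
    (V₀ V₁ : Submodule K V) (hcompl : IsCompl V₀ V₁)
    (hdV₁ : ∀ x ∈ V₁, d x ∈ V₁)
    (π₀ π₁ : V →ₗ[K] V)
    (hπ₀ : ∀ x : V, π₀ x ∈ V₀) (hπ₁ : ∀ x : V, π₁ x ∈ V₁)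
    (hπ : ∀ x : V, π₀ x + π₁ x = x)
    (hDinj : ∀ x ∈ V₀, π₁ (d x) = 0 → x = 0)
    (hDsurj : ∀ y ∈ V₁, ∃ x ∈ V₀, π₁ (d x) = y) :
    ∀ x₀ ∈ V₀, ∀ x₁ ∈ V₁, d (x₀ + x₁) = 0 →
      ∀ w ∈ V₀, π₁ (d w) = x₁ →
        x₀ = π₀ (d w) ∧ x₀ + x₁ = d w :=
  cocycle_is_explicit_coboundary_of_D_bijective_general d hdd V₀ V₁ π₀ π₁ hπ₀ hπ hDinj
end

section
/- If D : V₀ → V₁ is surjective, then the inclusion of ker D (which is d-invariant, with differential d₀) into (V, d) is a quasi-isomorphism; concretely: (i) for every x ∈ V with d x = 0 there exist y ∈ ker D with d y = 0 and z ∈ V such that x = y + d z; and (ii) if y ∈ ker D satisfies d y = 0 and y ∈ d(V), then y ∈ d(ker D). -/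
/-! Surjectivity of `D = π₁ ∘ d` means every vector `v` can be moved into `V₀` by subtracting a
coboundary `d a` (choose `a` with `π₁ (d a) = π₁ v`), which does not change `d v`. Applied to a
cocycle this gives (i); applied to a primitive `z` of `y` it gives a primitive of `y` in `V₀`, whose
`D`-image is `π₁ y = 0`, which gives (ii). -/

section Projections

variable {R M : Type*} [Ring R] [AddCommGroup M] [Module R M] {p q : Submodule R M}
  {π₀ π₁ : M →ₗ[R] M}

theorem mem_of_proj_eq_zero (hπ₀ : ∀ x, π₀ x ∈ p) (hπ : ∀ x, π₀ x + π₁ x = x) {x : M}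
    (hx : π₁ x = 0) : x ∈ p := by
  rw [← hπ x, hx, add_zero]
  exact hπ₀ x

theorem proj_eq_zero_of_mem (hpq : Disjoint p q) (hπ₀ : ∀ x, π₀ x ∈ p) (hπ₁ : ∀ x, π₁ x ∈ q)
    (hπ : ∀ x, π₀ x + π₁ x = x) {x : M} (hx : x ∈ p) : π₁ x = 0 := by
  have hπ₁x_mem : π₁ x ∈ p := by
    rw [eq_sub_of_add_eq' (hπ x)]
    exact sub_mem hx (hπ₀ x)
  exact Submodule.disjoint_def.mp hpq _ hπ₁x_mem (hπ₁ x)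

theorem exists_sub_mem_of_proj_comp_surjective (d : M →ₗ[R] M) (hπ₀ : ∀ x, π₀ x ∈ p)
    (hπ₁ : ∀ x, π₁ x ∈ q) (hπ : ∀ x, π₀ x + π₁ x = x) (hsurj : ∀ y ∈ q, ∃ a, π₁ (d a) = y)
    (v : M) : ∃ a, v - d a ∈ p := by
  obtain ⟨a, ha⟩ := hsurj _ (hπ₁ v)
  exact ⟨a, mem_of_proj_eq_zero hπ₀ hπ (by rw [map_sub, ha, sub_self])⟩

end Projections

theorem kerD_inclusion_quasi_iso_of_D_surjective_general
    {K V : Type*} [Field K] [AddCommGroup V] [Module K V]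
    (d : V →ₗ[K] V) (hdd : ∀ x : V, d (d x) = 0)
    (V₀ V₁ : Submodule K V) (hcompl : IsCompl V₀ V₁)
    (π₀ π₁ : V →ₗ[K] V)
    (hπ₀ : ∀ x : V, π₀ x ∈ V₀) (hπ₁ : ∀ x : V, π₁ x ∈ V₁)
    (hπ : ∀ x : V, π₀ x + π₁ x = x)
    (hDsurj : ∀ y ∈ V₁, ∃ x ∈ V₀, π₁ (d x) = y) :
    (∀ x : V, d x = 0 →
      ∃ y z : V, y ∈ V₀ ∧ π₁ (d y) = 0 ∧ d y = 0 ∧ x = y + d z) ∧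
    (∀ y : V, y ∈ V₀ → π₁ (d y) = 0 → d y = 0 → (∃ z : V, d z = y) →
      ∃ w : V, w ∈ V₀ ∧ π₁ (d w) = 0 ∧ d w = y) := by
  have hmove := exists_sub_mem_of_proj_comp_surjective d hπ₀ hπ₁ hπ
    fun y hy ↦ (hDsurj y hy).imp fun _ h ↦ h.2
  constructor
  · intro x hx
    obtain ⟨a, ha⟩ := hmove x
    have hd : d (x - d a) = 0 := by rw [map_sub, hx, hdd, sub_self]
    exact ⟨x - d a, a, ha, by rw [hd, map_zero], hd, (sub_add_cancel x (d a)).symm⟩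
  · rintro y hy - - ⟨z, rfl⟩
    obtain ⟨a, ha⟩ := hmove z
    have hd : d (z - d a) = d z := by rw [map_sub, hdd, sub_zero]
    exact ⟨z - d a, ha, by rw [hd]; exact proj_eq_zero_of_mem hcompl.disjoint hπ₀ hπ₁ hπ hy, hd⟩

/-- Setup: `V` a `K`-vector space with differential `d` (`d ∘ d = 0`),
`V₁ ⊆ V` a `d`-invariant subspace, `V₀` a complement, `π₀, π₁` the projections onto
`V₀` and `V₁`, and `D = π₁ ∘ d : V₀ → V₁`.  If `D` is surjective, then the inclusion of
`ker D = {x ∈ V₀ : π₁ (d x) = 0}` (which is `d`-invariant, with differential `d₀`) into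
`(V, d)` is a quasi-isomorphism; concretely:
(i) every cocycle of `V` is a cocycle of `ker D` plus a coboundary, and
(ii) a cocycle of `ker D` that is a coboundary in `V` is a coboundary in `ker D`. -/
theorem kerD_inclusion_quasi_iso_of_D_surjective
    {K V : Type*} [Field K] [AddCommGroup V] [Module K V]
    (d : V →ₗ[K] V) (hdd : ∀ x : V, d (d x) = 0)
    (V₀ V₁ : Submodule K V) (hcompl : IsCompl V₀ V₁)
    (hdV₁ : ∀ x ∈ V₁, d x ∈ V₁)
    (π₀ π₁ : V →ₗ[K] V)
    (hπ₀ : ∀ x : V, π₀ x ∈ V₀) (hπ₁ : ∀ x : V, π₁ x ∈ V₁)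
    (hπ : ∀ x : V, π₀ x + π₁ x = x)
    (hDsurj : ∀ y ∈ V₁, ∃ x ∈ V₀, π₁ (d x) = y) :
    (∀ x : V, d x = 0 →
      ∃ y z : V, y ∈ V₀ ∧ π₁ (d y) = 0 ∧ d y = 0 ∧ x = y + d z) ∧
    (∀ y : V, y ∈ V₀ → π₁ (d y) = 0 → d y = 0 → (∃ z : V, d z = y) →
      ∃ w : V, w ∈ V₀ ∧ π₁ (d w) = 0 ∧ d w = y) :=
  kerD_inclusion_quasi_iso_of_D_surjective_general d hdd V₀ V₁ hcompl π₀ π₁ hπ₀ hπ₁ hπ hDsurj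
end

section
/- If D : V₀ → V₁ is injective, then the quotient map from (V, d) to V/(V₀ ⊕ D(V₀)) (with the differential induced by d, which is well defined since V₀ + d(V₀) = V₀ ⊕ D(V₀) is d-invariant) is a quasi-isomorphism; concretely, writing S := V₀ ⊕ D(V₀): (i) for every x ∈ V with d x ∈ S there exists s ∈ S with d(x − s) = 0; and (ii) if x ∈ V satisfies d x = 0 and x ∈ d(V) + S, then x ∈ d(V). -/
/-!
Since `π₁ (d b)` differs from `d b` by the element `π₀ (d b)` of `V₀`, the subspace
`V₀ ⊔ D(V₀)` equals `V₀ + d(V₀)`, and injectivity of `D` says that `V₀` contains no nonzero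
cocycle. Writing an element of `V₀ + d(V₀)` as `a + d b`, in both claims the `V₀`-component `a`
turns out to be a cocycle, hence zero.
-/

section

variable {R M : Type*} [Ring R] [AddCommGroup M] [Module R M]

theorem sup_map_comp_eq_sup_map (d π₀ π₁ : M →ₗ[R] M) (V₀ : Submodule R M)
    (hπ₀ : ∀ x, π₀ x ∈ V₀) (hπ : ∀ x, π₀ x + π₁ x = x) :
    V₀ ⊔ V₀.map (π₁ ∘ₗ d) = V₀ ⊔ V₀.map d := by
  have hπ₁ : ∀ x, π₁ x = x - π₀ x := fun x => eq_sub_of_add_eq' (hπ x)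
  apply le_antisymm <;> refine sup_le le_sup_left ?_ <;> rintro _ ⟨b, hb, rfl⟩
  · rw [LinearMap.comp_apply, hπ₁]
    exact sub_mem (Submodule.mem_sup_right ⟨b, hb, rfl⟩) (Submodule.mem_sup_left (hπ₀ _))
  · rw [← hπ (d b)]
    exact add_mem (Submodule.mem_sup_left (hπ₀ _)) (Submodule.mem_sup_right ⟨b, hb, rfl⟩)

variable {d : M →ₗ[R] M} {V₀ : Submodule R M}

theorem exists_mem_apply_sub_eq_zero_of_apply_mem_sup_map (hdd : ∀ x, d (d x) = 0)
    (hV₀ : ∀ x ∈ V₀, d x = 0 → x = 0) {x : M} (hx : d x ∈ V₀ ⊔ V₀.map d) :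
    ∃ b ∈ V₀, d (x - b) = 0 := by
  obtain ⟨a, ha, _, ⟨b, hb, rfl⟩, hab⟩ := Submodule.mem_sup.mp hx
  have hxb : d (x - b) = a := by rw [map_sub, ← hab, add_sub_cancel_right]
  refine ⟨b, hb, ?_⟩
  rw [hxb]
  exact hV₀ a ha (by rw [← hxb, hdd])

theorem exists_apply_eq_of_apply_eq_zero (hdd : ∀ x, d (d x) = 0)
    (hV₀ : ∀ x ∈ V₀, d x = 0 → x = 0) {x : M} (hx : d x = 0)
    (hxs : ∃ z, ∃ s ∈ V₀ ⊔ V₀.map d, x = d z + s) : ∃ z, d z = x := by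
  obtain ⟨z, _, hs, rfl⟩ := hxs
  obtain ⟨a, ha, _, ⟨b, hb, rfl⟩, rfl⟩ := Submodule.mem_sup.mp hs
  have hda : d a = 0 := by
    rwa [map_add, map_add, hdd, hdd, zero_add, add_zero] at hx
  refine ⟨z + b, ?_⟩
  rw [hV₀ a ha hda, map_add, zero_add]

end

theorem quotient_quasi_iso_of_D_injective_general
    {K V : Type*} [Field K] [AddCommGroup V] [Module K V]
    (d : V →ₗ[K] V) (hdd : ∀ x : V, d (d x) = 0)
    (V₀ : Submodule K V)
    (π₀ π₁ : V →ₗ[K] V)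
    (hπ₀ : ∀ x : V, π₀ x ∈ V₀)
    (hπ : ∀ x : V, π₀ x + π₁ x = x)
    (hDinj : ∀ x ∈ V₀, π₁ (d x) = 0 → x = 0) :
    (∀ x : V, d x ∈ V₀ ⊔ Submodule.map (π₁ ∘ₗ d) V₀ →
      ∃ s ∈ V₀ ⊔ Submodule.map (π₁ ∘ₗ d) V₀, d (x - s) = 0) ∧
    (∀ x : V, d x = 0 →
      (∃ z : V, ∃ s ∈ V₀ ⊔ Submodule.map (π₁ ∘ₗ d) V₀, x = d z + s) →
      ∃ z : V, d z = x) := by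
  have hV₀ : ∀ x ∈ V₀, d x = 0 → x = 0 := fun x hx hdx => hDinj x hx (by rw [hdx, map_zero])
  rw [sup_map_comp_eq_sup_map d π₀ π₁ V₀ hπ₀ hπ]
  refine ⟨fun x hx => ?_, fun x hx => exists_apply_eq_of_apply_eq_zero hdd hV₀ hx⟩
  obtain ⟨b, hb, hxb⟩ := exists_mem_apply_sub_eq_zero_of_apply_mem_sup_map hdd hV₀ hx
  exact ⟨b, Submodule.mem_sup_left hb, hxb⟩

/-- Setup: `V` a `K`-vector space with differential `d` (`d ∘ d = 0`),
`V₁ ⊆ V` a `d`-invariant subspace, `V₀` a complement, `π₀, π₁` the projections onto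
`V₀` and `V₁`, and `D = π₁ ∘ d : V₀ → V₁`.  If `D` is injective, then the quotient map
from `(V, d)` to `V/(V₀ ⊕ D(V₀))` is a quasi-isomorphism; concretely, writing
`S := V₀ ⊔ D(V₀)` (which equals `V₀ + d(V₀)` and is `d`-invariant):
(i) every element of `V` whose differential lies in `S` becomes a cocycle after
subtracting an element of `S`, and
(ii) every cocycle of `V` that is a coboundary modulo `S` is a coboundary in `V`. -/
theorem quotient_quasi_iso_of_D_injective
    {K V : Type*} [Field K] [AddCommGroup V] [Module K V]
    (d : V →ₗ[K] V) (hdd : ∀ x : V, d (d x) = 0)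
    (V₀ V₁ : Submodule K V) (hcompl : IsCompl V₀ V₁)
    (hdV₁ : ∀ x ∈ V₁, d x ∈ V₁)
    (π₀ π₁ : V →ₗ[K] V)
    (hπ₀ : ∀ x : V, π₀ x ∈ V₀) (hπ₁ : ∀ x : V, π₁ x ∈ V₁)
    (hπ : ∀ x : V, π₀ x + π₁ x = x)
    (hDinj : ∀ x ∈ V₀, π₁ (d x) = 0 → x = 0) :
    (∀ x : V, d x ∈ V₀ ⊔ Submodule.map (π₁ ∘ₗ d) V₀ →
      ∃ s ∈ V₀ ⊔ Submodule.map (π₁ ∘ₗ d) V₀, d (x - s) = 0) ∧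
    (∀ x : V, d x = 0 →
      (∃ z : V, ∃ s ∈ V₀ ⊔ Submodule.map (π₁ ∘ₗ d) V₀, x = d z + s) →
      ∃ z : V, d z = x) :=
  quotient_quasi_iso_of_D_injective_general d hdd V₀ π₀ π₁ hπ₀ hπ hDinj
end

section
/- The image of the linear map δ : ⊕_{j ∈ Fin n} L_j → L, δ(F_0, …, F_{n−1}) = Σ_j ⁅F_j, x_j⁆, is exactly the multilinear subspace M ⊆ L; in particular δ is surjective onto the multilinear part of the free Lie algebra. -/
/-- The Lie algebra endomorphism of the free Lie algebra on `Fin n` over `ℚ` sending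
`x_j ↦ t • x_j` and `x_i ↦ x_i` for `i ≠ j`. -/
noncomputable def scaleLie (n : ℕ) (j : Fin n) (t : ℚ) :
    FreeLieAlgebra ℚ (Fin n) →ₗ⁅ℚ⁆ FreeLieAlgebra ℚ (Fin n) :=
  FreeLieAlgebra.lift ℚ
    (fun i => if i = j then t • FreeLieAlgebra.of ℚ i else FreeLieAlgebra.of ℚ i)

/-- The multilinear part `M` of the free Lie algebra on `Fin n` over `ℚ`: elements `F`
with `s_{j,t} F = t • F` for all `j ∈ Fin n` and all `t ∈ ℚ`. -/
noncomputable def lieMultilinear (n : ℕ) : Submodule ℚ (FreeLieAlgebra ℚ (Fin n)) where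
  carrier := {F | ∀ (j : Fin n) (t : ℚ), scaleLie n j t F = t • F}
  add_mem' := by
    intro a b ha hb j t
    rw [map_add, ha j t, hb j t, smul_add]
  zero_mem' := by
    intro j t
    simp
  smul_mem' := by
    intro c a ha j t
    rw [map_smul, ha j t, smul_comm]

/-- The subspace `L_j`: the multilinear part of the free Lie algebra on the generators
other than `x_j`, i.e. elements `F` with `s_{j,t} F = F` for all `t` and
`s_{i,t} F = t • F` for all `i ≠ j` and all `t`. -/
noncomputable def lieMultilinearAvoiding (n : ℕ) (j : Fin n) :
    Submodule ℚ (FreeLieAlgebra ℚ (Fin n)) where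
  carrier := {F | (∀ t : ℚ, scaleLie n j t F = F) ∧
    ∀ i : Fin n, i ≠ j → ∀ t : ℚ, scaleLie n i t F = t • F}
  add_mem' := by
    rintro a b ⟨ha1, ha2⟩ ⟨hb1, hb2⟩
    exact ⟨fun t => by rw [map_add, ha1 t, hb1 t],
      fun i hij t => by rw [map_add, ha2 i hij t, hb2 i hij t, smul_add]⟩
  zero_mem' := ⟨fun t => by simp, fun i hij t => by simp⟩
  smul_mem' := by
    rintro c a ⟨ha1, ha2⟩
    exact ⟨fun t => by rw [map_smul, ha1 t],
      fun i hij t => by rw [map_smul, ha2 i hij t, smul_comm]⟩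

/-- The linear map `δ : ⊕_{j ∈ Fin n} L_j → L`, `(F_0, …, F_{n−1}) ↦ Σ_j ⁅F_j, x_j⁆`. -/
noncomputable def lieDelta (n : ℕ) :
    ((j : Fin n) → lieMultilinearAvoiding n j) →ₗ[ℚ] FreeLieAlgebra ℚ (Fin n) where
  toFun F := ∑ j : Fin n, ⁅(F j : FreeLieAlgebra ℚ (Fin n)), FreeLieAlgebra.of ℚ j⁆
  map_add' F G := by
    simp only [Pi.add_apply, Submodule.coe_add, add_lie]
    rw [Finset.sum_add_distrib]
  map_smul' c F := by
    simp only [Pi.smul_apply, SetLike.val_smul, smul_lie, RingHom.id_apply]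
    rw [Finset.smul_sum]

/-! Lie monomials span the free Lie algebra, and a monomial of multidegree `d` is an eigenvector of
`s_{j,2}` with eigenvalue `2 ^ d j`. Since eigenspaces for distinct eigenvalues are independent, a
multilinear element lies in the span of the monomials of multidegree `(1, …, 1)`. For `n ≥ 2` such a
monomial is a bracket `⁅a, b⁆`, and the Jacobi identity, by induction on `b`, writes it as a sum of
brackets `⁅F, x_j⁆` with `F ∈ L_j`. -/

namespace LieSubalgebra

variable {R L : Type*} [CommRing R] [LieRing L] [LieAlgebra R L]

theorem lieSpan_eq_span_of_lie_mem {s : Set L}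
    (hs : ∀ x ∈ s, ∀ y ∈ s, ⁅x, y⁆ ∈ Submodule.span R s) :
    (lieSpan R L s).toSubmodule = Submodule.span R s := by
  have hlie : ∀ {x y}, x ∈ Submodule.span R s → y ∈ Submodule.span R s →
      ⁅x, y⁆ ∈ Submodule.span R s := fun hx hy => by
    have := Submodule.apply_mem_map₂
      (LinearMap.mk₂ R (fun a b : L => ⁅a, b⁆) add_lie smul_lie lie_add lie_smul) hx hy
    rw [Submodule.map₂_span_span] at this
    refine Submodule.span_le.mpr ?_ this
    rintro _ ⟨x, hx, y, hy, rfl⟩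
    exact hs x hx y hy
  refine le_antisymm ?_ submodule_span_le_lieSpan
  change _ ≤ ({ Submodule.span R s with lie_mem' := hlie } : LieSubalgebra R L).toSubmodule
  exact lieSpan_le.mpr Submodule.subset_span

end LieSubalgebra

namespace FreeLieAlgebra

variable (R X : Type*) [CommRing R]

theorem lieSpan_range_of : LieSubalgebra.lieSpan R (FreeLieAlgebra R X) (Set.range (of R)) = ⊤ := by
  set K := LieSubalgebra.lieSpan R (FreeLieAlgebra R X) (Set.range (of R))
  have hK : K.incl.comp (lift R fun x => ⟨of R x, LieSubalgebra.subset_lieSpan ⟨x, rfl⟩⟩) =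
      LieHom.id :=
    hom_ext fun x => by simp
  refine eq_top_iff.mpr fun y _ => ?_
  rw [← LieHom.id_apply (R := R) y, ← hK]
  exact Subtype.prop _

variable {R X}

inductive IsLieMonomial : (X →₀ ℕ) → FreeLieAlgebra R X → Prop
  | of (x : X) : IsLieMonomial (Finsupp.single x 1) (of R x)
  | lie {d e : X →₀ ℕ} {a b : FreeLieAlgebra R X} :
      IsLieMonomial d a → IsLieMonomial e b → IsLieMonomial (d + e) ⁅a, b⁆

variable (R X) in
theorem span_isLieMonomial :
    Submodule.span R {w : FreeLieAlgebra R X | ∃ d, IsLieMonomial d w} = ⊤ := by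
  rw [← LieSubalgebra.lieSpan_eq_span_of_lie_mem, eq_top_iff, ← LieSubalgebra.top_toSubmodule,
    ← lieSpan_range_of, LieSubalgebra.toSubmodule_le_toSubmodule]
  · exact LieSubalgebra.lieSpan_mono (Set.range_subset_iff.mpr fun x => ⟨_, .of x⟩)
  · rintro a ⟨d, ha⟩ b ⟨e, hb⟩
    exact Submodule.subset_span ⟨d + e, ha.lie hb⟩

end FreeLieAlgebra

open FreeLieAlgebra

section

variable {n : ℕ}

theorem scaleLie_of (j i : Fin n) (t : ℚ) :
    scaleLie n j t (of ℚ i) = if i = j then t • of ℚ i else of ℚ i :=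
  lift_of_apply _ _

theorem FreeLieAlgebra.IsLieMonomial.scaleLie_eq {d : Fin n →₀ ℕ}
    {w : FreeLieAlgebra ℚ (Fin n)} (hw : IsLieMonomial d w) (j : Fin n) (t : ℚ) :
    scaleLie n j t w = t ^ d j • w := by
  induction hw with
  | of i =>
    rw [scaleLie_of]
    split_ifs with hij
    · subst hij
      rw [Finsupp.single_eq_same, pow_one]
    · rw [Finsupp.single_eq_of_ne' hij, pow_zero, one_smul]
  | lie _ _ iha ihb =>
    rw [LieHom.map_lie, iha, ihb, smul_lie, lie_smul, smul_smul, ← pow_add, Finsupp.add_apply]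

theorem FreeLieAlgebra.IsLieMonomial.mem_eigenspace_scaleLie {d : Fin n →₀ ℕ}
    {w : FreeLieAlgebra ℚ (Fin n)} (hw : IsLieMonomial d w) (j : Fin n) (t : ℚ) :
    w ∈ Module.End.eigenspace (scaleLie n j t).toLinearMap (t ^ d j) :=
  Module.End.mem_eigenspace_iff.mpr (hw.scaleLie_eq j t)

noncomputable def lieMonomialSpan (P : (Fin n →₀ ℕ) → Prop) :
    Submodule ℚ (FreeLieAlgebra ℚ (Fin n)) :=
  Submodule.span ℚ {w | ∃ d, P d ∧ IsLieMonomial d w}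

theorem lieMonomialSpan_mono {P Q : (Fin n →₀ ℕ) → Prop} (h : ∀ d, P d → Q d) :
    lieMonomialSpan P ≤ lieMonomialSpan Q :=
  Submodule.span_mono fun _ ⟨d, hd, hw⟩ => ⟨d, h d hd, hw⟩

theorem lieMonomialSpan_eq_sup (P Q : (Fin n →₀ ℕ) → Prop) :
    lieMonomialSpan P =
      lieMonomialSpan (fun d => P d ∧ Q d) ⊔ lieMonomialSpan (fun d => P d ∧ ¬Q d) := by
  rw [lieMonomialSpan, lieMonomialSpan, lieMonomialSpan, ← Submodule.span_union]
  congr 1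
  ext w
  simp only [Set.mem_union]
  constructor
  · rintro ⟨d, hd, hw⟩
    by_cases hQ : Q d
    exacts [.inl ⟨d, ⟨hd, hQ⟩, hw⟩, .inr ⟨d, ⟨hd, hQ⟩, hw⟩]
  · rintro (⟨d, ⟨hd, _⟩, hw⟩ | ⟨d, ⟨hd, _⟩, hw⟩) <;> exact ⟨d, hd, hw⟩

theorem lieMonomialSpan_inf_lieMultilinear_le (P : (Fin n →₀ ℕ) → Prop) (j : Fin n) :
    lieMonomialSpan P ⊓ lieMultilinear n ≤ lieMonomialSpan (fun d => P d ∧ d j = 1) := by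
  rintro F ⟨hP, hM⟩
  rw [lieMonomialSpan_eq_sup P (fun d => d j = 1)] at hP
  obtain ⟨a, ha, b, hb, rfl⟩ := Submodule.mem_sup.mp hP
  set s : Module.End ℚ (FreeLieAlgebra ℚ (Fin n)) := (scaleLie n j 2).toLinearMap
  have ha₂ : a ∈ s.eigenspace 2 := by
    refine Submodule.span_le.mpr ?_ ha
    rintro w ⟨d, ⟨-, hd⟩, hw⟩
    have := hw.mem_eigenspace_scaleLie j 2
    rwa [hd, pow_one] at this
  have hb₂ : b ∈ s.eigenspace 2 := by
    have hab : a + b ∈ s.eigenspace 2 := Module.End.mem_eigenspace_iff.mpr (hM j 2)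
    simpa using sub_mem hab ha₂
  have hb_ne : b ∈ ⨆ μ ≠ 2, s.eigenspace μ := by
    refine Submodule.span_le.mpr ?_ hb
    rintro w ⟨d, ⟨-, hd⟩, hw⟩
    refine Submodule.mem_iSup_of_mem _ (Submodule.mem_iSup_of_mem (fun h => ?_)
      (hw.mem_eigenspace_scaleLie j 2))
    exact hd (Nat.pow_right_injective le_rfl (by exact_mod_cast h : 2 ^ d j = 2 ^ 1))
  rw [Submodule.disjoint_def.mp (s.eigenspaces_iSupIndep 2) b hb₂ hb_ne, add_zero]
  exact ha

theorem mem_lieMonomialSpan_of_mem_lieMultilinear {F : FreeLieAlgebra ℚ (Fin n)}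
    (hF : F ∈ lieMultilinear n) : F ∈ lieMonomialSpan (fun d : Fin n →₀ ℕ => ∀ i, d i = 1) := by
  suffices ∀ s : Finset (Fin n), F ∈ lieMonomialSpan (fun d => ∀ i ∈ s, d i = 1) by
    simpa using this Finset.univ
  intro s
  induction s using Finset.induction_on with
  | empty => simp [lieMonomialSpan, span_isLieMonomial]
  | insert j s _ ih =>
    refine lieMonomialSpan_mono ?_ (lieMonomialSpan_inf_lieMultilinear_le _ j ⟨ih, hF⟩)
    rintro d ⟨hs, hj⟩ i hi
    rcases Finset.mem_insert.mp hi with rfl | hi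
    exacts [hj, hs i hi]

theorem FreeLieAlgebra.IsLieMonomial.mem_lieMultilinearAvoiding {d : Fin n →₀ ℕ}
    {w : FreeLieAlgebra ℚ (Fin n)} (hw : IsLieMonomial d w) {j : Fin n} (hj : d j = 0)
    (hne : ∀ i ≠ j, d i = 1) : w ∈ lieMultilinearAvoiding n j :=
  ⟨fun t => by rw [hw.scaleLie_eq, hj, pow_zero, one_smul],
    fun i hij t => by rw [hw.scaleLie_eq, hne i hij, pow_one]⟩

theorem lie_mem_lieMultilinear_of_mem_lieMultilinearAvoiding {j : Fin n}
    {F : FreeLieAlgebra ℚ (Fin n)} (hF : F ∈ lieMultilinearAvoiding n j) :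
    ⁅F, of ℚ j⁆ ∈ lieMultilinear n := by
  intro i t
  rw [LieHom.map_lie, scaleLie_of]
  split_ifs with hji
  · rw [← hji, hF.1 t, lie_smul]
  · rw [hF.2 i (Ne.symm hji) t, smul_lie]

theorem lieDelta_apply (F : (j : Fin n) → lieMultilinearAvoiding n j) :
    lieDelta n F = ∑ j, ⁅(F j : FreeLieAlgebra ℚ (Fin n)), of ℚ j⁆ :=
  rfl

theorem range_lieDelta_le : LinearMap.range (lieDelta n) ≤ lieMultilinear n := by
  rintro _ ⟨F, rfl⟩
  rw [lieDelta_apply]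
  exact Submodule.sum_mem _ fun j _ =>
    lie_mem_lieMultilinear_of_mem_lieMultilinearAvoiding (F j).2

theorem lieDelta_single (j : Fin n) (F : lieMultilinearAvoiding n j) :
    lieDelta n (Pi.single j F) = ⁅(F : FreeLieAlgebra ℚ (Fin n)), of ℚ j⁆ := by
  rw [lieDelta_apply, Finset.sum_eq_single_of_mem j (Finset.mem_univ j) fun i _ hij => ?_]
  · rw [Pi.single_eq_same]
  · rw [Pi.single_eq_of_ne hij, ZeroMemClass.coe_zero, zero_lie]

theorem FreeLieAlgebra.IsLieMonomial.lie_mem_range_lieDelta {e : Fin n →₀ ℕ}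
    {b : FreeLieAlgebra ℚ (Fin n)} (hb : IsLieMonomial e b) {d : Fin n →₀ ℕ}
    {a : FreeLieAlgebra ℚ (Fin n)} (ha : IsLieMonomial d a) (hde : ∀ i, d i + e i = 1) :
    ⁅a, b⁆ ∈ LinearMap.range (lieDelta n) := by
  induction hb generalizing d a with
  | of j =>
    have haL := ha.mem_lieMultilinearAvoiding (j := j) (by simpa using hde j)
      fun i hij => by simpa [Finsupp.single_eq_of_ne hij] using hde i
    exact ⟨Pi.single j ⟨a, haL⟩, lieDelta_single j ⟨a, haL⟩⟩
  | @lie _ _ b₁ b₂ hb₁ hb₂ ih₁ ih₂ =>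
    rw [leibniz_lie, ← lie_skew b₁]
    refine add_mem (ih₂ (ha.lie hb₁) fun i => ?_) (neg_mem (ih₁ (ha.lie hb₂) fun i => ?_)) <;>
    · have := hde i
      simp only [Finsupp.add_apply] at this ⊢
      omega

end

/-- For `n ≥ 2`, the image of the linear map
`δ : ⊕_{j ∈ Fin n} L_j → L`, `δ(F_0, …, F_{n−1}) = Σ_j ⁅F_j, x_j⁆`, is exactly the
multilinear subspace `M ⊆ L`; in particular `δ` is surjective onto the multilinear
part of the free Lie algebra. -/
theorem lieDelta_range_eq_multilinear (n : ℕ) (hn : 2 ≤ n) :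
    LinearMap.range (lieDelta n) = lieMultilinear n := by
  refine le_antisymm range_lieDelta_le fun F hF => ?_
  refine Submodule.span_le.mpr ?_ (mem_lieMonomialSpan_of_mem_lieMultilinear hF)
  rintro w ⟨d, hd, hw⟩
  cases hw with
  | of j =>
    obtain ⟨i, hij⟩ := Fintype.exists_ne_of_one_lt_card (by rw [Fintype.card_fin]; omega) j
    simpa [Finsupp.single_eq_of_ne hij] using hd i
  | lie ha hb => exact hb.lie_mem_range_lieDelta ha (by simpa using hd)
end

section
/- The family of vectors r_{ij} := (e_i + e_j, −h_{ij}) in (Fin n → ℚ) × (Finset (Fin n) → ℚ), indexed by the n(n−1)/2 unordered pairs {i, j} of distinct elements of Fin n, is linearly independent over ℚ. -/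
/-!
Write `P = {i, j}` and `Q = {k, l}`. The functional `(v, w) ↦ (Σ_{a ∈ P} v a + w P) / 2` sends
`r_{kl}` to `(|P ∩ Q| - [|P ∩ Q| = 1]) / 2`, because for `n ≥ 4` the set `P` has an admissible
size and separates `k` from `l` exactly when `|P ∩ Q| = 1`; since `|P ∩ Q| ≤ 2`, this is `[P = Q]`.
For `n ≤ 3` any two pairs meet, and `(v, w) ↦ Σ_{a ∈ P} v a - (Σ_a v a) / 2` sends `r_{kl}` to
`|P ∩ Q| - 1 = [P = Q]`. Either way the `r_{ij}` admit a dual family, so they are independent.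
-/

/-- The indicator function `h_{ij} : Finset (Fin n) → ℚ` of the collection of subsets
`A ⊆ Fin n` with `2 ≤ |A| ≤ n − 2` that separate `i` and `j` (contain exactly one of
`i` and `j`). -/
def sepIndicator (n : ℕ) (i j : Fin n) : Finset (Fin n) → ℚ := fun A =>
  if 2 ≤ A.card ∧ A.card ≤ n - 2 ∧ ((i ∈ A ∧ j ∉ A) ∨ (j ∈ A ∧ i ∉ A)) then 1 else 0

/-- The vector `r_{ij} := (e_i + e_j, −h_{ij})` in `(Fin n → ℚ) × (Finset (Fin n) → ℚ)`,
where `e_i` is the `i`-th standard basis vector; note `r_{ij} = r_{ji}`. -/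
def rVec (n : ℕ) (i j : Fin n) : (Fin n → ℚ) × (Finset (Fin n) → ℚ) :=
  (Pi.single i 1 + Pi.single j 1, -sepIndicator n i j)

open Finset

theorem linearIndependent_of_map_eq_single {R ι M : Type*} [Semiring R] [DecidableEq ι]
    [AddCommMonoid M] [Module R M] {f : ι → M} (L : M →ₗ[R] ι → R)
    (hL : ∀ q, L (f q) = Pi.single q 1) : LinearIndependent R f :=
  .of_comp L <| by simpa only [Function.comp_def, hL] using Pi.linearIndependent_single_one ι R

namespace Finset

theorem sum_apply_sum_single_one {α R : Type*} [DecidableEq α] [Semiring R] (s t : Finset α) :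
    ∑ a ∈ s, (∑ b ∈ t, Pi.single b (1 : R)) a = #(s ∩ t) := by
  simp [sum_apply, Pi.single_apply]

theorem separates_iff_card_inter_eq_one {α : Type*} [DecidableEq α] {k l : α} (hkl : k ≠ l)
    (s : Finset α) : (k ∈ s ∧ l ∉ s) ∨ (l ∈ s ∧ k ∉ s) ↔ #(s ∩ {k, l}) = 1 := by
  by_cases hk : k ∈ s <;> by_cases hl : l ∈ s <;>
    simp [hk, hl, hkl, inter_insert_of_mem, inter_insert_of_notMem]

theorem card_inter_eq_left_iff {α : Type*} [DecidableEq α] {s t : Finset α} (h : #s = #t) :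
    #(s ∩ t) = #s ↔ s = t := by
  refine ⟨fun hst => ?_, fun hst => by rw [hst, inter_self]⟩
  have hsub : s ⊆ t := inter_eq_left.mp (eq_of_subset_of_card_le inter_subset_left hst.ge)
  exact eq_of_subset_of_card_le hsub h.ge

end Finset

section

variable {n : ℕ}

def pairSet (p : Fin n × Fin n) : Finset (Fin n) := {p.1, p.2}

theorem card_pairSet {p : Fin n × Fin n} (hp : p.1 < p.2) : #(pairSet p) = 2 :=
  card_pair hp.ne

theorem pairSet_inj {p q : Fin n × Fin n} (hp : p.1 < p.2) (hq : q.1 < q.2) :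
    pairSet p = pairSet q ↔ p = q := by
  refine ⟨fun h => ?_, congrArg pairSet⟩
  have h1 : p.1 ∈ pairSet q := h ▸ mem_insert_self _ _
  have h2 : p.2 ∈ pairSet q := h ▸ mem_insert_of_mem (mem_singleton_self _)
  have h3 : q.1 ∈ pairSet p := h.symm ▸ mem_insert_self _ _
  simp only [pairSet, mem_insert, mem_singleton] at h1 h2 h3
  rcases p with ⟨i, j⟩; rcases q with ⟨k, l⟩
  simp only [Fin.lt_def, Fin.ext_iff, Prod.mk.injEq] at *
  omega

theorem sepIndicator_eq {p : Fin n × Fin n} (hp : p.1 ≠ p.2) (s : Finset (Fin n)) :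
    sepIndicator n p.1 p.2 s = if 2 ≤ #s ∧ #s ≤ n - 2 ∧ #(s ∩ pairSet p) = 1 then 1 else 0 := by
  simp only [sepIndicator, separates_iff_card_inter_eq_one hp]; rfl

theorem rVec_eq {p : Fin n × Fin n} (hp : p.1 ≠ p.2) :
    rVec n p.1 p.2 = (∑ b ∈ pairSet p, Pi.single b 1, -sepIndicator n p.1 p.2) := by
  rw [pairSet, sum_pair hp]; rfl

variable (p q : {p : Fin n × Fin n // p.1 < p.2})

theorem card_pairSet_inter_le_two : #(pairSet p.1 ∩ pairSet q.1) ≤ 2 :=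
  card_pairSet p.2 ▸ card_le_card inter_subset_left

theorem card_pairSet_inter_eq_two_iff : #(pairSet p.1 ∩ pairSet q.1) = 2 ↔ p = q := by
  rw [← card_pairSet p.2, card_inter_eq_left_iff ((card_pairSet p.2).trans (card_pairSet q.2).symm),
    pairSet_inj p.2 q.2, Subtype.ext_iff]

theorem one_le_card_pairSet_inter (hn : n ≤ 3) : 1 ≤ #(pairSet p.1 ∩ pairSet q.1) := by
  have := card_union_add_card_inter (pairSet p.1) (pairSet q.1)
  have := card_le_univ (pairSet p.1 ∪ pairSet q.1)
  rw [card_pairSet p.2, card_pairSet q.2, Fintype.card_fin] at *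
  omega

end

def dualOfFourLe (n : ℕ) :
    ((Fin n → ℚ) × (Finset (Fin n) → ℚ)) →ₗ[ℚ] ({p : Fin n × Fin n // p.1 < p.2} → ℚ) where
  toFun x p := (∑ a ∈ pairSet p.1, x.1 a + x.2 (pairSet p.1)) / 2
  map_add' x y := by
    funext p
    simp only [Prod.fst_add, Prod.snd_add, Pi.add_apply, sum_add_distrib]
    ring
  map_smul' c x := by
    funext p
    simp only [Prod.smul_fst, Prod.smul_snd, Pi.smul_apply, smul_eq_mul, ← mul_sum,
      RingHom.id_apply]
    ring

def dualOfLeThree (n : ℕ) :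
    ((Fin n → ℚ) × (Finset (Fin n) → ℚ)) →ₗ[ℚ] ({p : Fin n × Fin n // p.1 < p.2} → ℚ) where
  toFun x p := ∑ a ∈ pairSet p.1, x.1 a - (∑ a, x.1 a) / 2
  map_add' x y := by
    funext p
    simp only [Prod.fst_add, Pi.add_apply, sum_add_distrib]
    ring
  map_smul' c x := by
    funext p
    simp only [Prod.smul_fst, Pi.smul_apply, smul_eq_mul, ← mul_sum, RingHom.id_apply]
    ring

theorem dualOfFourLe_rVec {n : ℕ} (hn : 4 ≤ n) (q : {p : Fin n × Fin n // p.1 < p.2}) :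
    dualOfFourLe n (rVec n q.1.1 q.1.2) = Pi.single q 1 := by
  funext p
  have hc := card_pairSet_inter_le_two p q
  have hn' : 2 ≤ n - 2 := by omega
  simp only [dualOfFourLe, LinearMap.coe_mk, AddHom.coe_mk, rVec_eq q.2.ne, Pi.neg_apply,
    sepIndicator_eq q.2.ne, sum_apply_sum_single_one, card_pairSet p.2, le_refl, hn', true_and,
    Pi.single_apply, ← card_pairSet_inter_eq_two_iff p q]
  interval_cases #(pairSet p.1 ∩ pairSet q.1) <;> norm_num

theorem dualOfLeThree_rVec {n : ℕ} (hn : n ≤ 3) (q : {p : Fin n × Fin n // p.1 < p.2}) :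
    dualOfLeThree n (rVec n q.1.1 q.1.2) = Pi.single q 1 := by
  funext p
  have hc := card_pairSet_inter_le_two p q
  have hc' := one_le_card_pairSet_inter p q hn
  simp only [dualOfLeThree, LinearMap.coe_mk, AddHom.coe_mk, rVec_eq q.2.ne,
    sum_apply_sum_single_one, univ_inter, card_pairSet q.2, Pi.single_apply,
    ← card_pairSet_inter_eq_two_iff p q]
  interval_cases #(pairSet p.1 ∩ pairSet q.1) <;> norm_num

theorem rVec_linearIndependent_general (n : ℕ) :
    LinearIndependent ℚ
      (fun p : {p : Fin n × Fin n // p.1 < p.2} => rVec n p.1.1 p.1.2) := by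
  rcases le_or_gt 4 n with hn | hn
  · exact linearIndependent_of_map_eq_single _ (dualOfFourLe_rVec hn)
  · exact linearIndependent_of_map_eq_single _ (dualOfLeThree_rVec (by omega))

/-- For `n ≥ 3`, the family of vectors `r_{ij}`, indexed by the
`n(n−1)/2` unordered pairs `{i, j}` of distinct elements of `Fin n` (here represented
by ordered pairs with `i < j`), is linearly independent over `ℚ`. -/
theorem rVec_linearIndependent (n : ℕ) (hn : 3 ≤ n) :
    LinearIndependent ℚ
      (fun p : {p : Fin n × Fin n // p.1 < p.2} => rVec n p.1.1 p.1.2) :=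
  rVec_linearIndependent_general n
end

section
/- Let W ⊆ (Fin n → ℚ) × (Finset (Fin n) → ℚ) be the subspace of pairs (ψ, f) such that f(A) = 0 whenever |A| < 2 or |A| > n−2, and f(A) = f(Aᶜ) for all A. Then every r_{ij} lies in W, the dimension of W is 2^{n−1} − 1, and the quotient of W by the span of the vectors r_{ij} has dimension 2^{n−1} − n(n−1)/2 − 1 (which equals the dimension of H²(M̄_{0,n})). -/
/-- The subspace `W ⊆ (Fin n → ℚ) × (Finset (Fin n) → ℚ)` of pairs `(ψ, f)` such that
`f(A) = 0` whenever `|A| < 2` or `|A| > n − 2`, and `f(A) = f(Aᶜ)` for all `A`. -/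
def Wsub (n : ℕ) : Submodule ℚ ((Fin n → ℚ) × (Finset (Fin n) → ℚ)) where
  carrier := {p | (∀ A : Finset (Fin n), (A.card < 2 ∨ n - 2 < A.card) → p.2 A = 0) ∧
    ∀ A : Finset (Fin n), p.2 A = p.2 Aᶜ}
  add_mem' := by
    rintro a b ⟨ha1, ha2⟩ ⟨hb1, hb2⟩
    refine ⟨fun A hA => ?_, fun A => ?_⟩
    · show a.2 A + b.2 A = 0
      rw [ha1 A hA, hb1 A hA, add_zero]
    · show a.2 A + b.2 A = a.2 Aᶜ + b.2 Aᶜ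
      rw [ha2 A, hb2 A]
  zero_mem' := ⟨fun A _ => rfl, fun A => rfl⟩
  smul_mem' := by
    rintro c a ⟨ha1, ha2⟩
    refine ⟨fun A hA => ?_, fun A => ?_⟩
    · show c * a.2 A = 0
      rw [ha1 A hA, mul_zero]
    · show c * a.2 A = c * a.2 Aᶜ
      rw [ha2 A]

/-!
An element `(ψ, f)` of `W` is determined by `ψ` and by the values of `f` on the sets `A` with
`2 ≤ |A| ≤ n - 2` that contain a fixed point `a`, and these values can be prescribed freely;
there are `2^{n-1} - n - 1` such sets. The `r_{ij}` are linearly independent: for `n ≥ 4` the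
functional `(ψ, f) ↦ f(s) + Σ_{x ∈ s} ψ_x` takes the value `2` on `r_s` and `0` on every other
`r_t` with `|t| = 2`; for `n = 3` there are no such sets `A`, and
`(ψ, f) ↦ Σ_{x ∈ s} ψ_x - Σ_{x ∉ s} ψ_x` plays the same role.
-/

open Finset

/-- The index sets `A` of the boundary divisors `δ_{0,A}`. -/
def IsStableSplit (n : ℕ) (A : Finset (Fin n)) : Prop := 2 ≤ #A ∧ #A ≤ n - 2

instance {n : ℕ} : DecidablePred (IsStableSplit n) := fun A => by
  unfold IsStableSplit; infer_instance

section StableSplit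

variable {n : ℕ}

lemma isStableSplit_compl {A : Finset (Fin n)} : IsStableSplit n Aᶜ ↔ IsStableSplit n A := by
  have := card_le_univ A
  simp only [IsStableSplit, card_compl, Fintype.card_fin] at *
  omega

lemma mem_Wsub_iff {p : (Fin n → ℚ) × (Finset (Fin n) → ℚ)} :
    p ∈ Wsub n ↔ (∀ A, ¬IsStableSplit n A → p.2 A = 0) ∧ ∀ A, p.2 A = p.2 Aᶜ := by
  have h (A : Finset (Fin n)) : #A < 2 ∨ n - 2 < #A ↔ ¬IsStableSplit n A := by
    unfold IsStableSplit; omega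
  change (∀ A, _ → _) ∧ _ ↔ _
  simp only [h]

lemma sepIndicator_compl (i j : Fin n) (A : Finset (Fin n)) :
    sepIndicator n i j Aᶜ = sepIndicator n i j A := by
  have h := isStableSplit_compl (A := A)
  simp only [IsStableSplit] at h
  simp only [sepIndicator, mem_compl, not_not]
  refine if_congr ?_ rfl rfl
  rw [← and_assoc, h, and_assoc]
  tauto

lemma rVec_mem_Wsub (i j : Fin n) : rVec n i j ∈ Wsub n := by
  refine mem_Wsub_iff.2 ⟨fun A hA => ?_, fun A => ?_⟩
  · simp only [rVec, Pi.neg_apply, sepIndicator, neg_eq_zero, ite_eq_right_iff, one_ne_zero]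
    exact fun h => hA ⟨h.1, h.2.1⟩
  · simp only [rVec, Pi.neg_apply, sepIndicator_compl]

end StableSplit

lemma card_filter_powerset_one_le_card_le_sub_two {α : Type*} (S : Finset α) (hS : 2 ≤ #S) :
    #(S.powerset.filter fun B => 1 ≤ #B ∧ #B ≤ #S - 2) + #S + 2 = 2 ^ #S := by
  obtain ⟨m, hm⟩ : ∃ m, #S = m + 1 + 1 := ⟨#S - 2, by omega⟩
  rw [card_filter, sum_powerset_apply_card (fun k => if 1 ≤ k ∧ k ≤ #S - 2 then 1 else 0), hm,
    ← Nat.sum_range_choose (m + 1 + 1)]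
  simp only [smul_eq_mul, mul_ite, mul_one, mul_zero, sum_range_succ' _ (m + 1 + 1),
    sum_range_succ _ (m + 1), sum_range_succ _ m, Nat.choose_zero_right, Nat.choose_self,
    Nat.choose_succ_self_right]
  have hmid : ∀ k ∈ range m,
      (if 1 ≤ k + 1 ∧ k + 1 ≤ m + 1 + 1 - 2 then (m + 1 + 1).choose (k + 1) else 0)
      = (m + 1 + 1).choose (k + 1) := fun k hk => if_pos (by simp at hk; omega)
  rw [sum_congr rfl hmid]
  simp

section SideContaining

variable {n : ℕ} (a : Fin n)

def sideContaining (A : Finset (Fin n)) : Finset (Fin n) := if a ∈ A then A else Aᶜ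

lemma mem_sideContaining (A : Finset (Fin n)) : a ∈ sideContaining a A := by
  unfold sideContaining; split_ifs with h <;> simp [h]

lemma sideContaining_of_mem {A : Finset (Fin n)} (h : a ∈ A) : sideContaining a A = A :=
  if_pos h

lemma sideContaining_compl (A : Finset (Fin n)) : sideContaining a Aᶜ = sideContaining a A := by
  unfold sideContaining; split_ifs <;> simp_all

lemma isStableSplit_sideContaining {A : Finset (Fin n)} :
    IsStableSplit n (sideContaining a A) ↔ IsStableSplit n A := by
  unfold sideContaining; split_ifs
  exacts [Iff.rfl, isStableSplit_compl]

lemma apply_sideContaining {p : (Fin n → ℚ) × (Finset (Fin n) → ℚ)} (hp : p ∈ Wsub n)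
    (A : Finset (Fin n)) : p.2 (sideContaining a A) = p.2 A := by
  unfold sideContaining; split_ifs
  exacts [rfl, ((mem_Wsub_iff.1 hp).2 A).symm]

abbrev StableSplitsAt : Type := {A : Finset (Fin n) // a ∈ A ∧ IsStableSplit n A}

def Wsub.equivStableSplitsAt : Wsub n ≃ₗ[ℚ] (Fin n → ℚ) × (StableSplitsAt a → ℚ) where
  toFun w := (w.1.1, fun A => w.1.2 A.1)
  map_add' _ _ := rfl
  map_smul' _ _ := rfl
  invFun g := ⟨(g.1, fun A => if h : IsStableSplit n A then
      g.2 ⟨sideContaining a A, mem_sideContaining a A, (isStableSplit_sideContaining a).2 h⟩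
      else 0), by
    refine mem_Wsub_iff.2 ⟨fun A hA => dif_neg hA, fun A => ?_⟩
    simp only [isStableSplit_compl, sideContaining_compl]⟩
  left_inv w := by
    refine Subtype.ext (Prod.ext rfl (funext fun A => ?_))
    dsimp only
    split_ifs with h
    · exact apply_sideContaining a w.2 A
    · exact ((mem_Wsub_iff.1 w.2).1 A h).symm
  right_inv g := by
    refine Prod.ext rfl (funext fun A => ?_)
    dsimp only
    rw [dif_pos A.2.2]
    exact congrArg g.2 (Subtype.ext (sideContaining_of_mem a A.2.1))

lemma finrank_Wsub : Module.finrank ℚ (Wsub n) = n + Fintype.card (StableSplitsAt a) := by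
  rw [(Wsub.equivStableSplitsAt a).finrank_eq, Module.finrank_prod, Module.finrank_fin_fun,
    Module.finrank_fintype_fun_eq_card]

lemma card_stableSplitsAt_add (hn : 3 ≤ n) :
    Fintype.card (StableSplitsAt a) + n + 1 = 2 ^ (n - 1) := by
  have hS : #(univ.erase a) = n - 1 := by simp
  have hcard : Fintype.card (StableSplitsAt a) =
      #((univ.erase a).powerset.filter fun B => 1 ≤ #B ∧ #B ≤ #(univ.erase a) - 2) := by
    rw [Fintype.card_subtype]
    refine card_nbij' (·.erase a) (insert a) ?_ ?_ ?_ ?_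
    · intro A hA
      rw [mem_coe, mem_filter] at hA
      obtain ⟨-, haA, hA2, hA3⟩ := hA
      rw [mem_coe, mem_filter, mem_powerset, hS, card_erase_of_mem haA]
      exact ⟨erase_subset_erase a (subset_univ A), by omega, by omega⟩
    · intro B hB
      rw [mem_coe, mem_filter, mem_powerset, hS] at hB
      have haB : a ∉ B := fun h => by simpa using hB.1 h
      rw [mem_coe, mem_filter, IsStableSplit, card_insert_of_notMem haB]
      exact ⟨mem_univ _, mem_insert_self a B, by omega, by omega⟩
    · intro A hA
      simp only [mem_coe, mem_filter] at hA
      exact insert_erase hA.2.1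
    · intro B hB
      simp only [mem_coe, mem_filter, mem_powerset] at hB
      exact erase_insert fun h => by simpa using hB.1 h
  have := card_filter_powerset_one_le_card_le_sub_two (univ.erase a) (by omega)
  rw [← hcard, hS] at this
  omega

end SideContaining

lemma linearIndependent_of_dual_eq_ite {ι K V : Type*} [Field K] [AddCommGroup V] [Module K V]
    [DecidableEq ι] {v : ι → V} (φ : ι → V →ₗ[K] K) {c : K} (hc : c ≠ 0)
    (h : ∀ i j, φ i (v j) = if i = j then c else 0) : LinearIndependent K v := by
  rw [linearIndependent_iff']
  intro s g hg i hi
  have := congrArg (φ i) hg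
  simp only [map_sum, map_smul, h, smul_eq_mul, mul_ite, mul_zero, sum_ite_eq, if_pos hi,
    map_zero] at this
  exact (mul_eq_zero.1 this).resolve_right hc

lemma eq_pair_iff_mem {α : Type*} [DecidableEq α] {s : Finset α} (hs : #s = 2) {i j : α}
    (hij : i ≠ j) : s = {i, j} ↔ i ∈ s ∧ j ∈ s := by
  refine ⟨fun h => by simp [h], fun h => (eq_of_subset_of_card_le ?_ ?_).symm⟩
  · simpa [insert_subset_iff] using h
  · rw [hs, card_pair hij]

section Pairs

variable {n : ℕ}

def rPair (n : ℕ) (s : Finset (Fin n)) : (Fin n → ℚ) × (Finset (Fin n) → ℚ) :=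
  (∑ x ∈ s, Pi.single x 1,
    -fun A => if IsStableSplit n A ∧ ¬s ⊆ A ∧ ¬Disjoint s A then 1 else 0)

lemma rVec_eq_rPair {i j : Fin n} (hij : i ≠ j) : rVec n i j = rPair n {i, j} := by
  refine Prod.ext (sum_pair (f := fun x => Pi.single x (1 : ℚ)) hij).symm (funext fun A => ?_)
  simp only [rVec, rPair, sepIndicator, IsStableSplit, Pi.neg_apply, neg_inj, insert_subset_iff,
    singleton_subset_iff, disjoint_insert_left, disjoint_singleton_left]
  refine if_congr ?_ rfl rfl
  tauto

lemma sum_rVec_fst (s : Finset (Fin n)) (i j : Fin n) :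
    ∑ x ∈ s, (rVec n i j).1 x = (if i ∈ s then 1 else 0) + (if j ∈ s then 1 else 0) := by
  simp [rVec, sum_add_distrib, sum_pi_single']

def IsPairDual (n : ℕ) (φ : Finset (Fin n) → ((Fin n → ℚ) × (Finset (Fin n) → ℚ)) →ₗ[ℚ] ℚ) :
    Prop :=
  ∀ s, #s = 2 → ∀ i j, i ≠ j → φ s (rVec n i j) = if s = {i, j} then 2 else 0

lemma exists_isPairDual_of_four_le (hn : 4 ≤ n) : ∃ φ, IsPairDual n φ := by
  refine ⟨fun s => (LinearMap.proj s : (Finset (Fin n) → ℚ) →ₗ[ℚ] ℚ) ∘ₗ LinearMap.snd ℚ _ _ +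
    ∑ x ∈ s, (LinearMap.proj x : (Fin n → ℚ) →ₗ[ℚ] ℚ) ∘ₗ LinearMap.fst ℚ _ _,
    fun s hs i j hij => ?_⟩
  have hsum := sum_rVec_fst s i j
  simp only [LinearMap.add_apply, LinearMap.sum_apply, LinearMap.comp_apply,
    LinearMap.snd_apply, LinearMap.fst_apply, LinearMap.proj_apply] at hsum ⊢
  simp only [hsum, eq_pair_iff_mem hs hij]
  have hstable : 2 ≤ #s ∧ #s ≤ n - 2 := by omega
  by_cases hi : i ∈ s <;> by_cases hj : j ∈ s <;>
    norm_num [rVec, sepIndicator, hstable, hi, hj]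

lemma exists_isPairDual_of_eq_three (hn : n = 3) : ∃ φ, IsPairDual n φ := by
  refine ⟨fun s => ∑ x ∈ s, (LinearMap.proj x : (Fin n → ℚ) →ₗ[ℚ] ℚ) ∘ₗ LinearMap.fst ℚ _ _ -
    ∑ x ∈ sᶜ, (LinearMap.proj x : (Fin n → ℚ) →ₗ[ℚ] ℚ) ∘ₗ LinearMap.fst ℚ _ _,
    fun s hs i j hij => ?_⟩
  simp only [LinearMap.sub_apply, LinearMap.sum_apply, LinearMap.comp_apply,
    LinearMap.fst_apply, LinearMap.proj_apply, sum_rVec_fst, mem_compl, eq_pair_iff_mem hs hij]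
  have hsc : #sᶜ = 1 := by rw [card_compl, Fintype.card_fin, hs, hn]
  have hij' : ¬(i ∈ sᶜ ∧ j ∈ sᶜ) := fun h => hij (card_le_one.1 hsc.le i h.1 j h.2)
  rw [mem_compl, mem_compl] at hij'
  by_cases hi : i ∈ s <;> by_cases hj : j ∈ s
  · norm_num [hi, hj]
  · norm_num [hi, hj]
  · norm_num [hi, hj]
  · exact absurd ⟨hi, hj⟩ hij'

lemma linearIndependent_rPair (hn : 3 ≤ n) :
    LinearIndependent ℚ fun s : {s : Finset (Fin n) // #s = 2} => rPair n s := by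
  obtain ⟨φ, hφ⟩ := (eq_or_lt_of_le hn).elim (fun h => exists_isPairDual_of_eq_three h.symm)
    exists_isPairDual_of_four_le
  refine linearIndependent_of_dual_eq_ite (fun s => φ s.1) two_ne_zero fun s t => ?_
  obtain ⟨i, j, hij, ht⟩ := card_eq_two.1 t.2
  have hr : rPair n t = rVec n i j := ht ▸ (rVec_eq_rPair hij).symm
  simp only [hr, hφ s s.2 i j hij, ← ht, Subtype.ext_iff]

lemma setOf_rVec_eq_range_rPair (n : ℕ) :
    {v | ∃ i j : Fin n, i ≠ j ∧ v = rVec n i j} =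
      Set.range fun s : {s : Finset (Fin n) // #s = 2} => rPair n s := by
  ext v
  constructor
  · rintro ⟨i, j, hij, rfl⟩
    exact ⟨⟨{i, j}, card_pair hij⟩, (rVec_eq_rPair hij).symm⟩
  · rintro ⟨⟨s, hs⟩, rfl⟩
    obtain ⟨i, j, hij, rfl⟩ := card_eq_two.1 hs
    exact ⟨i, j, hij, (rVec_eq_rPair hij).symm⟩

lemma finrank_span_rVec (hn : 3 ≤ n) :
    Module.finrank ℚ (Submodule.span ℚ {v | ∃ i j : Fin n, i ≠ j ∧ v = rVec n i j}) =
      n.choose 2 := by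
  rw [setOf_rVec_eq_range_rPair, finrank_span_eq_card (linearIndependent_rPair hn),
    Fintype.card_finset_len, Fintype.card_fin]

end Pairs

/-- For `n ≥ 3`: every `r_{ij}` (for `i ≠ j`) lies in `W`; the
dimension of `W` is `2^{n−1} − 1`; and the quotient of `W` by the span of the vectors
`r_{ij}` has dimension `2^{n−1} − n(n−1)/2 − 1` (the dimension of `H²(M̄_{0,n})`). -/
theorem Wsub_finrank_and_quotient (n : ℕ) (hn : 3 ≤ n) :
    (∀ i j : Fin n, i ≠ j → rVec n i j ∈ Wsub n) ∧
    Module.finrank ℚ (Wsub n) = 2 ^ (n - 1) - 1 ∧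
    Module.finrank ℚ
      (↥(Wsub n) ⧸ (Submodule.span ℚ
        {v | ∃ i j : Fin n, i ≠ j ∧ v = rVec n i j}).comap (Wsub n).subtype) =
      2 ^ (n - 1) - n * (n - 1) / 2 - 1 := by
  have hW : Module.finrank ℚ (Wsub n) = 2 ^ (n - 1) - 1 := by
    let a : Fin n := ⟨0, by omega⟩
    have := card_stableSplitsAt_add a hn
    rw [finrank_Wsub a]
    omega
  have hle : Submodule.span ℚ {v | ∃ i j : Fin n, i ≠ j ∧ v = rVec n i j} ≤ Wsub n :=
    Submodule.span_le.2 fun _ ⟨i, j, _, hv⟩ => hv ▸ rVec_mem_Wsub i j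
  refine ⟨fun i j _ => rVec_mem_Wsub i j, hW, ?_⟩
  rw [Submodule.finrank_quotient, (Submodule.comapSubtypeEquivOfLe hle).finrank_eq,
    finrank_span_rVec hn, hW, Nat.choose_two_right, Nat.sub_right_comm]
end
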